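/- arXiv:1901.10932 — 2 statements merged into one kernel-verified Lean document; each statement's English description precedes it below -/
import Mathlib

section
/- Let γ > 0, let y ∈ ℝ with y ≠ γ and y ≠ −γ, and let k ∈ ℤ. Then (1/π) · ∫_{−π/2}^{π/2} [sinh(2γ) / (sin(x + i(γ+y)) · sin(x − i(γ−y)))] · e^{−2ikx} dx = Σ_{σ ∈ {+1,−1}} 2 · sign(γ + σy) · H(k·(y + σγ)) · e^{−2k(y + σγ)}, where H(t) = 1 for t > 0, H(0) = 1/2, H(t) = 0 for t < 0 is the Heaviside function and sign(t) = t/|t| for t ≠ 0. -/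
/-!
With `A = x + i(y + γ)` and `B = x + i(y - γ)` we have `A - B = 2iγ`, so
`sinh (2γ) = -i sin (A - B)` and the kernel is the partial fraction `i (cot A - cot B)`.
For `Im z > 0` the cotangent is the geometric series `cot z = i - 2i ∑_{n ≥ 0} e^{2inz}`;
on the line `z = x + ic`, `c > 0`, its terms are `e^{-2nc} e^{2inx}`, dominated by a summable
sequence, so integrating termwise against `e^{-2ikx}` picks out the single coefficient `n = k`.
The reflection `x ↦ -x` turns the case `c < 0` into `c > 0`.
-/

noncomputable def heaviside (t : ℝ) : ℝ := if 0 < t then 1 else if t = 0 then 1 / 2 else 0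

theorem heaviside_of_pos {t : ℝ} (ht : 0 < t) : heaviside t = 1 := if_pos ht

theorem heaviside_zero : heaviside 0 = 1 / 2 := by simp [heaviside]

theorem heaviside_of_neg {t : ℝ} (ht : t < 0) : heaviside t = 0 := by
  simp [heaviside, ht.not_gt, ht.ne]

open Complex
open scoped Real

theorem Complex.sin_ne_zero_of_im_ne_zero {z : ℂ} (hz : z.im ≠ 0) : sin z ≠ 0 := by
  refine sin_ne_zero_iff.2 fun k hk => hz ?_
  simp [hk]

theorem continuous_cot_add_I_mul {c : ℝ} (hc : c ≠ 0) :
    Continuous fun x : ℝ => cot (x + I * c) := by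
  simp only [cot_eq_cos_div_sin]
  exact Continuous.div (by fun_prop) (by fun_prop)
    fun x => sin_ne_zero_of_im_ne_zero (by simpa using hc)

theorem integral_exp_two_mul_I_mul_int (m : ℤ) :
    ∫ x in -(π / 2)..π / 2, exp (2 * I * m * x) = if m = 0 then (π : ℂ) else 0 := by
  split_ifs with hm
  · simp [hm]
  have hc : 2 * I * m ≠ 0 := by simp [hm, I_ne_zero]
  rw [integral_exp_mul_complex hc, sub_eq_zero_of_eq, zero_div]
  exact exp_eq_exp_iff_exists_int.2 ⟨m, by push_cast; ring⟩

theorem Complex.hasSum_cot_sub_I {z : ℂ} (hz : 0 < z.im) :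
    HasSum (fun n : ℕ => -2 * I * exp (2 * I * z) ^ n) (cot z - I) := by
  have hq : ‖exp (2 * I * z)‖ < 1 := by
    rw [norm_exp, Real.exp_lt_one_iff]
    simpa using hz
  have hq₁ : 1 - exp (2 * I * z) ≠ 0 := sub_ne_zero.2 fun h => by simp [← h] at hq
  have hcot : cot z - I = -2 * I * (1 - exp (2 * I * z))⁻¹ := by
    rw [cot_eq_exp_ratio]
    field_simp
    ring_nf
    simp only [I_sq]
    ring
  rw [hcot]
  exact (hasSum_geometric_of_norm_lt_one hq).mul_left (-2 * I)

theorem integral_mul_exp_of_hasSum {f : ℝ → ℂ} {a : ℕ → ℂ}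
    (ha : Summable fun n => ‖a n‖)
    (hf : ∀ x : ℝ, HasSum (fun n : ℕ => a n * exp (2 * I * n * x)) (f x)) (k : ℤ) :
    (1 / π) * ∫ x in -(π / 2)..π / 2, f x * exp (-2 * I * k * x)
      = if 0 ≤ k then a k.toNat else 0 := by
  have hπ : (π : ℂ) ≠ 0 := ofReal_ne_zero.2 Real.pi_ne_zero
  have hterm (n : ℕ) :
      (1 / π) * ∫ x in -(π / 2)..π / 2, a n * exp (2 * I * n * x) * exp (-2 * I * k * x)
        = if (n : ℤ) = k then a n else 0 := by
    have hexp (x : ℝ) : exp (2 * I * n * x) * exp (-2 * I * k * x)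
        = exp (2 * I * ((n - k : ℤ) : ℂ) * x) := by
      rw [← exp_add]; congr 1; push_cast; ring
    simp only [mul_assoc (a n), hexp, intervalIntegral.integral_const_mul,
      integral_exp_two_mul_I_mul_int, sub_eq_zero]
    split_ifs
    · field_simp
    · simp
  have hsum : HasSum
      (fun n : ℕ => ∫ x in -(π / 2)..π / 2, a n * exp (2 * I * n * x) * exp (-2 * I * k * x))
      (∫ x in -(π / 2)..π / 2, f x * exp (-2 * I * k * x)) :=
    intervalIntegral.hasSum_integral_of_dominated_convergence
      (fun n _ => ‖a n‖) (fun n => by fun_prop)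
      (fun n => .of_forall fun x _ => by simp [norm_exp])
      (.of_forall fun _ _ => ha) intervalIntegrable_const
      (.of_forall fun x _ => (hf x).mul_right _)
  rw [← hsum.tsum_eq, ← tsum_mul_left]
  simp only [hterm]
  split_ifs with hk
  · lift k to ℕ using hk
    simp
  · simp only [show ∀ n : ℕ, (n : ℤ) ≠ k by omega, if_false, tsum_zero]

noncomputable def cotFourierCoeff (c : ℝ) (k : ℤ) : ℂ :=
  (1 / π) * ∫ x in -(π / 2)..π / 2, cot (x + I * c) * exp (-2 * I * k * x)

theorem hasSum_cot_add_I_mul_sub_I {c : ℝ} (hc : 0 < c) (x : ℝ) :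
    HasSum (fun n : ℕ => (-2 * I * (Real.exp (-2 * c) : ℂ) ^ n) * exp (2 * I * n * x))
      (cot (x + I * c) - I) := by
  convert hasSum_cot_sub_I (z := x + I * c) (by simpa using hc) using 1
  funext n
  rw [mul_assoc, ofReal_exp, ← exp_nat_mul, ← exp_nat_mul, ← exp_add]
  congr 2
  push_cast
  ring_nf
  rw [I_sq]
  ring

theorem cotFourierCoeff_of_pos {c : ℝ} (hc : 0 < c) (k : ℤ) :
    cotFourierCoeff c k
      = (if 0 ≤ k then -2 * I * Real.exp (-2 * k * c) else 0) + if k = 0 then I else 0 := by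
  have hsummable : Summable fun n : ℕ => ‖-2 * I * (Real.exp (-2 * c) : ℂ) ^ n‖ := by
    refine ((summable_geometric_of_lt_one (Real.exp_nonneg _)
      (Real.exp_lt_one_iff.2 (by linarith : -2 * c < 0))).mul_left 2).congr fun n => ?_
    simp [norm_exp]
  have hsplit : cotFourierCoeff c k
      = (1 / π) * (∫ x in -(π / 2)..π / 2, (cot (x + I * c) - I) * exp (-2 * I * k * x))
        + I * ((1 / π) * ∫ x in -(π / 2)..π / 2, exp (2 * I * (-k : ℤ) * x)) := by
    have hcont : Continuous fun x : ℝ => (cot (x + I * c) - I) * exp (-2 * I * k * x) :=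
      ((continuous_cot_add_I_mul hc.ne').sub continuous_const).mul (by fun_prop)
    rw [mul_left_comm, ← mul_add, ← intervalIntegral.integral_const_mul,
      ← intervalIntegral.integral_add (hcont.intervalIntegrable _ _)
        (Continuous.intervalIntegrable (by fun_prop) _ _), cotFourierCoeff]
    congr 2 with x
    push_cast
    ring_nf
  rw [hsplit, integral_mul_exp_of_hasSum hsummable (hasSum_cot_add_I_mul_sub_I hc),
    integral_exp_two_mul_I_mul_int]
  congr 1
  · split_ifs with hk
    · lift k to ℕ using hk
      rw [Int.toNat_natCast, ← ofReal_pow, ← Real.exp_nat_mul]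
      push_cast
      ring_nf
    · rfl
  · have hπ : (π : ℂ) ≠ 0 := ofReal_ne_zero.2 Real.pi_ne_zero
    simp [hπ]

theorem cotFourierCoeff_neg (c : ℝ) (k : ℤ) :
    cotFourierCoeff (-c) (-k) = -cotFourierCoeff c k := by
  have hreflect (x : ℝ) : cot (x + I * (-c : ℝ)) * exp (-2 * I * (-k : ℤ) * x)
      = -(cot ((-x : ℝ) + I * c) * exp (-2 * I * k * (-x : ℝ))) := by
    have hneg : (x : ℂ) + I * (-c : ℝ) = -((-x : ℝ) + I * c) := by push_cast; ring
    rw [hneg, cot_eq_cos_div_sin, cot_eq_cos_div_sin, cos_neg, sin_neg, div_neg]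
    push_cast
    ring_nf
  simp only [cotFourierCoeff, hreflect, intervalIntegral.integral_neg,
    intervalIntegral.integral_comp_neg fun t : ℝ => cot (t + I * c) * exp (-2 * I * k * t),
    neg_neg, mul_neg]

theorem I_mul_cotFourierCoeff_of_pos {c : ℝ} (hc : 0 < c) (k : ℤ) :
    I * cotFourierCoeff c k
      = ((2 * Real.sign c * heaviside (k * c) * Real.exp (-2 * k * c) : ℝ) : ℂ) := by
  rw [cotFourierCoeff_of_pos hc, Real.sign_of_pos hc]
  rcases lt_trichotomy k 0 with hk | rfl | hk
  · rw [heaviside_of_neg (mul_neg_of_neg_of_pos (by exact_mod_cast hk) hc)]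
    simp [hk.not_ge, hk.ne]
  · simp only [Int.cast_zero, mul_zero, zero_mul, heaviside_zero, Real.exp_zero, le_refl,
      if_true]
    push_cast
    linear_combination -I_mul_I
  · rw [heaviside_of_pos (mul_pos (by exact_mod_cast hk) hc), if_pos hk.le, if_neg hk.ne']
    push_cast
    linear_combination -2 * exp (-2 * k * c) * I_mul_I

theorem I_mul_cotFourierCoeff {c : ℝ} (hc : c ≠ 0) (k : ℤ) :
    I * cotFourierCoeff c k
      = ((2 * Real.sign c * heaviside (k * c) * Real.exp (-2 * k * c) : ℝ) : ℂ) := by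
  rcases hc.lt_or_gt with hneg | hpos
  · have hreflect := cotFourierCoeff_neg (-c) (-k)
    rw [neg_neg, neg_neg] at hreflect
    rw [hreflect, mul_neg, I_mul_cotFourierCoeff_of_pos (neg_pos.2 hneg), Real.sign_neg]
    push_cast
    ring_nf
  · exact I_mul_cotFourierCoeff_of_pos hpos k

theorem Complex.sinh_sub_div_sin_mul_sin {z a b : ℂ} (ha : sin (z + I * a) ≠ 0)
    (hb : sin (z + I * b) ≠ 0) :
    sinh (a - b) / (sin (z + I * a) * sin (z + I * b))
      = I * (cot (z + I * a) - cot (z + I * b)) := by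
  have hsinh : sinh (a - b) = -I * sin ((z + I * a) - (z + I * b)) := by
    rw [show z + I * a - (z + I * b) = (a - b) * I by ring, sin_mul_I]
    ring_nf
    rw [I_sq]
    ring
  rw [hsinh, sin_sub, cot_eq_cos_div_sin, cot_eq_cos_div_sin]
  field_simp
  ring

theorem integral_sinh_div_sin_mul_sin_mul_exp {a b : ℝ} (ha : a ≠ 0) (hb : b ≠ 0) (k : ℤ) :
    (1 / (π : ℂ)) * ∫ x in -(π / 2)..π / 2,
        sinh (a - b) / (sin (x + I * a) * sin (x + I * b)) * exp (-2 * I * k * x)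
      = I * cotFourierCoeff a k - I * cotFourierCoeff b k := by
  have hintegrand (x : ℝ) :
      sinh (a - b) / (sin (x + I * a) * sin (x + I * b)) * exp (-2 * I * k * x)
        = I * (cot (x + I * a) * exp (-2 * I * k * x))
          - I * (cot (x + I * b) * exp (-2 * I * k * x)) := by
    rw [sinh_sub_div_sin_mul_sin (sin_ne_zero_of_im_ne_zero (by simpa using ha))
      (sin_ne_zero_of_im_ne_zero (by simpa using hb))]
    ring
  have hint {c : ℝ} (hc : c ≠ 0) :
      IntervalIntegrable (fun x : ℝ => cot (x + I * c) * exp (-2 * I * k * x))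
        MeasureTheory.volume (-(π / 2)) (π / 2) :=
    ((continuous_cot_add_I_mul hc).mul (by fun_prop)).intervalIntegrable _ _
  rw [intervalIntegral.integral_congr fun x _ => hintegrand x,
    intervalIntegral.integral_sub ((hint ha).const_mul I) ((hint hb).const_mul I),
    intervalIntegral.integral_const_mul, intervalIntegral.integral_const_mul]
  simp only [cotFourierCoeff]
  ring

theorem fourier_coefficient_shifted_kernel_general
    (γ y : ℝ) (h1 : y ≠ γ) (h2 : y ≠ -γ) (k : ℤ) :
    (1 / (Real.pi : ℂ)) *
        ∫ x in (-(Real.pi / 2))..(Real.pi / 2),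
          Complex.sinh (2 * γ) /
              (Complex.sin ((x : ℂ) + Complex.I * ((γ : ℂ) + (y : ℂ))) *
                Complex.sin ((x : ℂ) - Complex.I * ((γ : ℂ) - (y : ℂ)))) *
            Complex.exp (-2 * Complex.I * k * x)
      = ((2 * Real.sign (γ + y) * heaviside (k * (y + γ)) * Real.exp (-2 * k * (y + γ))
          + 2 * Real.sign (γ - y) * heaviside (k * (y - γ)) * Real.exp (-2 * k * (y - γ)) : ℝ) : ℂ) := by
  have hplus : y + γ ≠ 0 := fun h => h2 (by linarith)
  have hminus : y - γ ≠ 0 := fun h => h1 (by linarith)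
  have hkernel (x : ℝ) :
      sinh (2 * γ) / (sin ((x : ℂ) + I * ((γ : ℂ) + (y : ℂ))) * sin ((x : ℂ) - I * (γ - y)))
        = sinh ((y + γ : ℝ) - (y - γ : ℝ)) /
          (sin (x + I * (y + γ : ℝ)) * sin (x + I * (y - γ : ℝ))) := by
    push_cast
    ring_nf
  simp only [hkernel]
  rw [integral_sinh_div_sin_mul_sin_mul_exp hplus hminus, I_mul_cotFourierCoeff hplus,
    I_mul_cotFourierCoeff hminus, add_comm γ y, show γ - y = -(y - γ) by ring, Real.sign_neg]
  push_cast
  ring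

/-- Fourier coefficients of the shifted kernel `φ'(x+iy, γ)`: for `γ > 0`, `y ≠ ±γ` and
`k ∈ ℤ`,
`(1/π) ∫_{−π/2}^{π/2} sinh(2γ)/(sin(x+i(γ+y)) sin(x−i(γ−y))) e^{−2ikx} dx
  = Σ_{σ=±1} 2 sign(γ+σy) H(k(y+σγ)) e^{−2k(y+σγ)}`. -/
theorem fourier_coefficient_shifted_kernel
    (γ y : ℝ) (hγ : 0 < γ) (h1 : y ≠ γ) (h2 : y ≠ -γ) (k : ℤ) :
    (1 / (Real.pi : ℂ)) *
        ∫ x in (-(Real.pi / 2))..(Real.pi / 2),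
          Complex.sinh (2 * γ) /
              (Complex.sin ((x : ℂ) + Complex.I * ((γ : ℂ) + (y : ℂ))) *
                Complex.sin ((x : ℂ) - Complex.I * ((γ : ℂ) - (y : ℂ)))) *
            Complex.exp (-2 * Complex.I * k * x)
      = ((2 * Real.sign (γ + y) * heaviside (k * (y + γ)) * Real.exp (-2 * k * (y + γ))
          + 2 * Real.sign (γ - y) * heaviside (k * (y - γ)) * Real.exp (-2 * k * (y - γ)) : ℝ) : ℂ) :=
  fourier_coefficient_shifted_kernel_general γ y h1 h2 k
end

section
/- Let L be an odd integer, Δ and h real numbers, and consider the open XXZ Hamiltonian H_L with antiparallel boundary fields h₋ = h and h₊ = −h. Then every eigenvalue of H_L has even multiplicity, i.e. the entire spectrum is (at least) doubly degenerate. -/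
open Matrix Finset

def pauliX : Matrix (Fin 2) (Fin 2) ℂ := !![0, 1; 1, 0]
def pauliY : Matrix (Fin 2) (Fin 2) ℂ := !![0, -Complex.I; Complex.I, 0]
def pauliZ : Matrix (Fin 2) (Fin 2) ℂ := !![1, 0; 0, -1]

/-- The operator acting as `m` on the `j`-th tensor factor of `(ℂ²)^{⊗L}` and as the
identity on every other factor. -/
def siteOp (L : ℕ) (j : Fin L) (m : Matrix (Fin 2) (Fin 2) ℂ) :
    Matrix (Fin L → Fin 2) (Fin L → Fin 2) ℂ :=
  Matrix.of fun x y =>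
    m (x j) (y j) * ∏ i ∈ Finset.univ.filter (fun i => i ≠ j), (if x i = y i then (1 : ℂ) else 0)

/-- The open XXZ Hamiltonian with boundary fields `hm` (left) and `hp` (right). -/
noncomputable def xxzH (Δ hm hp : ℝ) (L : ℕ) :
    Matrix (Fin L → Fin 2) (Fin L → Fin 2) ℂ :=
  (∑ j : Fin (L - 1),
      (siteOp L (Fin.castLE (Nat.sub_le L 1) j) pauliX *
          siteOp L ⟨j.1 + 1, by have := j.2; omega⟩ pauliX +
        siteOp L (Fin.castLE (Nat.sub_le L 1) j) pauliY *
          siteOp L ⟨j.1 + 1, by have := j.2; omega⟩ pauliY +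
        (Δ : ℂ) • (siteOp L (Fin.castLE (Nat.sub_le L 1) j) pauliZ *
            siteOp L ⟨j.1 + 1, by have := j.2; omega⟩ pauliZ - 1))) +
    (if h : 0 < L then
        (hm : ℂ) • siteOp L ⟨0, h⟩ pauliZ + (hp : ℂ) • siteOp L ⟨L - 1, by omega⟩ pauliZ
      else 0)

/-- The operator `σ₁^z` on the first site of the chain. -/
noncomputable def sigma1z (L : ℕ) : Matrix (Fin L → Fin 2) (Fin L → Fin 2) ℂ :=
  if h : 0 < L then siteOp L ⟨0, h⟩ pauliZ else 0

/-- The `k`-th eigenvalue (0-indexed, in nondecreasing order, counted with multiplicity)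
of a Hermitian matrix; junk value `0` if `k` exceeds the dimension. -/
noncomputable def sortedEig {n : Type} [Fintype n] [DecidableEq n] {A : Matrix n n ℂ}
    (hA : A.IsHermitian) (k : ℕ) : ℝ :=
  if h : k < Fintype.card n then
    (hA.eigenvalues₀ ∘ Tuple.sort hA.eigenvalues₀) ⟨k, h⟩
  else 0

/-- The filter of even natural numbers tending to infinity. -/
def evenAtTop : Filter ℕ := Filter.atTop ⊓ Filter.principal {L | Even L}

open Module in

lemma even_finrank_of_antilinear :
    ∀ (n : ℕ) (E : Type) [AddCommGroup E] [Module ℂ E] [FiniteDimensional ℂ E]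
      (J : E → E), (∀ u v, J (u + v) = J u + J v) →
      (∀ (c : ℂ) (v : E), J (c • v) = (starRingEnd ℂ c) • J v) →
      (∀ v, J (J v) = -v) → finrank ℂ E = n → Even n := by
  intro n
  induction n using Nat.strong_induction_on with
  | _ n IH =>
    intro E _ _ _ J hadd hsmul hJJ hn
    rcases Nat.eq_zero_or_pos n with h0 | hpos
    · simp [h0]
    have hJ0 : J 0 = 0 := by
      have := hsmul 0 0; simpa using this
    have hJneg : ∀ u, J (-u) = -J u := by
      intro u
      have := hsmul (-1) u; simpa using this
    have hJsub : ∀ u w, J (u - w) = J u - J w := by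
      intro u w; rw [sub_eq_add_neg, hadd, hJneg, ← sub_eq_add_neg]
    -- find a nonzero vector
    have hE : 0 < finrank ℂ E := hn ▸ hpos
    have : Nontrivial E := finrank_pos_iff.mp hE
    obtain ⟨v, hv⟩ := exists_ne (0 : E)
    -- v and J v are linearly independent
    have hli : LinearIndependent ℂ ![v, J v] := by
      rw [LinearIndependent.pair_iff]
      intro s t hst
      have e2 : (starRingEnd ℂ s) • J v - (starRingEnd ℂ t) • v = 0 := by
        have h1 := congrArg J hst
        rw [hadd, hsmul, hsmul, hJJ, hJ0, smul_neg, ← sub_eq_add_neg] at h1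
        exact h1
      have e3 : ((starRingEnd ℂ s) * s + t * (starRingEnd ℂ t)) • v = 0 := by
        have : ((starRingEnd ℂ s) * s + t * (starRingEnd ℂ t)) • v
            = (starRingEnd ℂ s) • (s • v + t • J v)
              - t • ((starRingEnd ℂ s) • J v - (starRingEnd ℂ t) • v) := by
          module
        rw [this, hst, e2, smul_zero, smul_zero, sub_zero]
      have e4 : (starRingEnd ℂ s) * s + t * (starRingEnd ℂ t) = 0 :=
        (smul_eq_zero.mp e3).resolve_right hv
      have e5 : ((Complex.normSq s + Complex.normSq t : ℝ) : ℂ) = 0 := by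
        rw [← e4, mul_comm ((starRingEnd ℂ) s) s, Complex.mul_conj, Complex.mul_conj]; push_cast; ring
      have e6 : Complex.normSq s + Complex.normSq t = 0 := by exact_mod_cast e5
      constructor
      · exact Complex.normSq_eq_zero.mp (by nlinarith [Complex.normSq_nonneg s, Complex.normSq_nonneg t])
      · exact Complex.normSq_eq_zero.mp (by nlinarith [Complex.normSq_nonneg s, Complex.normSq_nonneg t])
    set W : Submodule ℂ E := Submodule.span ℂ (Set.range ![v, J v]) with hWdef
    have hrange : Set.range ![v, J v] = {v, J v} := by
      ext z; simp [Fin.exists_fin_two]; tauto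
    have hW2 : finrank ℂ W = 2 := by
      rw [finrank_span_eq_card hli]; simp
    have hvW : v ∈ W := Submodule.subset_span (by rw [hrange]; left; rfl)
    have hJvW : J v ∈ W := Submodule.subset_span (by rw [hrange]; right; rfl)
    have Jinv : ∀ u ∈ W, J u ∈ W := by
      intro u hu
      induction hu using Submodule.span_induction with
      | mem z hz =>
        rw [hrange] at hz
        rcases hz with rfl | rfl
        · exact hJvW
        · rw [hJJ]; exact W.neg_mem hvW
      | zero => rw [hJ0]; exact W.zero_mem
      | add a b _ _ ha hb => rw [hadd]; exact W.add_mem ha hb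
      | smul c a _ ha => rw [hsmul]; exact W.smul_mem _ ha
    -- the induced map on the quotient
    have keyJ : ∀ a b : E, (Submodule.quotientRel W).r a b →
        Submodule.Quotient.mk (p := W) (J a) = Submodule.Quotient.mk (J b) := by
      intro a b hab
      rw [Submodule.quotientRel_def] at hab
      rw [Submodule.Quotient.eq, ← hJsub]
      exact Jinv _ hab
    let J' : (E ⧸ W) → (E ⧸ W) := fun q =>
      Quotient.liftOn' q (fun u => Submodule.Quotient.mk (J u)) keyJ
    have hJ'mk : ∀ u : E, J' (Submodule.Quotient.mk u) = Submodule.Quotient.mk (J u) :=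
      fun u => rfl
    have hsurj := Submodule.Quotient.mk_surjective W
    have hq : finrank ℂ (E ⧸ W) + 2 = n := by
      rw [← hn, ← hW2]; exact Submodule.finrank_quotient_add_finrank W
    have hlt : finrank ℂ (E ⧸ W) < n := by omega
    have heven := IH _ hlt (E ⧸ W) J'
      (by
        intro a b
        obtain ⟨a, rfl⟩ := hsurj a
        obtain ⟨b, rfl⟩ := hsurj b
        rw [← Submodule.Quotient.mk_add, hJ'mk, hJ'mk, hJ'mk, hadd, Submodule.Quotient.mk_add])
      (by
        intro c a
        obtain ⟨a, rfl⟩ := hsurj a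
        rw [← Submodule.Quotient.mk_smul, hJ'mk, hJ'mk, hsmul, Submodule.Quotient.mk_smul])
      (by
        intro a
        obtain ⟨a, rfl⟩ := hsurj a
        rw [hJ'mk, hJ'mk, hJJ, Submodule.Quotient.mk_neg])
      rfl
    have : n = finrank ℂ (E ⧸ W) + 2 := hq.symm
    rw [this]
    exact heven.add even_two
    

-- single site op entry
lemma siteOp_apply (L : ℕ) (j : Fin L) (m) (x y : Fin L → Fin 2) :
    siteOp L j m x y =
      m (x j) (y j) * ∏ i ∈ Finset.univ.filter (fun i => i ≠ j), (if x i = y i then (1:ℂ) else 0) :=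
  rfl

-- two-site product formula
lemma siteOp_mul_apply (L : ℕ) (j k : Fin L) (hjk : j ≠ k) (a b) (x y : Fin L → Fin 2) :
    (siteOp L j a * siteOp L k b) x y =
      a (x j) (y j) * b (x k) (y k) *
        ∏ i ∈ Finset.univ.filter (fun i => i ≠ j ∧ i ≠ k), (if x i = y i then (1:ℂ) else 0) := by
  rw [Matrix.mul_apply]
  rw [Finset.sum_eq_single (Function.update x j (y j))]
  · rw [siteOp_apply, siteOp_apply]
    rw [Function.update_self, Function.update_of_ne hjk.symm]
    have h1 : ∏ i ∈ Finset.univ.filter (fun i => i ≠ j),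
        (if x i = Function.update x j (y j) i then (1:ℂ) else 0) = 1 := by
      apply Finset.prod_eq_one
      intro i hi
      rw [Finset.mem_filter] at hi
      rw [Function.update_of_ne hi.2, if_pos rfl]
    have h2 : ∏ i ∈ Finset.univ.filter (fun i => i ≠ k),
        (if Function.update x j (y j) i = y i then (1:ℂ) else 0)
        = ∏ i ∈ Finset.univ.filter (fun i => i ≠ j ∧ i ≠ k), (if x i = y i then (1:ℂ) else 0) := by
      rw [← Finset.prod_erase (s := Finset.univ.filter (fun i => i ≠ k))
        (f := fun i => (if Function.update x j (y j) i = y i then (1:ℂ) else 0)) (a := j)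
        (by show (if Function.update x j (y j) j = y j then (1:ℂ) else 0) = 1
            rw [Function.update_self, if_pos rfl])]
      have hset : (Finset.univ.filter (fun i => i ≠ k)).erase j
          = Finset.univ.filter (fun i => i ≠ j ∧ i ≠ k) := by
        ext i; simp [Finset.mem_erase, and_comm]
      rw [hset]
      apply Finset.prod_congr rfl
      intro i hi
      rw [Finset.mem_filter] at hi
      rw [Function.update_of_ne hi.2.1]
    rw [h1, h2]; ring
  · intro z _ hz
    obtain ⟨i₀, hi₀⟩ := Function.ne_iff.mp hz
    rcases eq_or_ne i₀ j with rfl | hij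
    · rw [Function.update_self] at hi₀
      rw [siteOp_apply (x := z)]
      have : ∏ i ∈ Finset.univ.filter (fun i => i ≠ k), (if z i = y i then (1:ℂ) else 0) = 0 := by
        apply Finset.prod_eq_zero (i := i₀)
        · simp [hjk]
        · rw [if_neg hi₀]
      rw [this]; ring
    · rw [Function.update_of_ne hij] at hi₀
      rw [siteOp_apply (y := z)]
      have : ∏ i ∈ Finset.univ.filter (fun i => i ≠ j), (if x i = z i then (1:ℂ) else 0) = 0 := by
        apply Finset.prod_eq_zero (i := i₀)
        · simp [hij]
        · rw [if_neg (fun hh => hi₀ hh.symm)]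
      rw [this]; ring
  · intro h; exact absurd (Finset.mem_univ _) h

lemma siteOp_comm (L : ℕ) {j k : Fin L} (hjk : j ≠ k) (a b) :
    siteOp L j a * siteOp L k b = siteOp L k b * siteOp L j a := by
  ext x y
  rw [siteOp_mul_apply L j k hjk, siteOp_mul_apply L k j hjk.symm]
  have hset : Finset.univ.filter (fun i => i ≠ j ∧ i ≠ k)
      = Finset.univ.filter (fun i : Fin L => i ≠ k ∧ i ≠ j) := by
    ext i; simp [and_comm]
  rw [hset]; ring

def flip2 (a : Fin 2) : Fin 2 := a + 1

lemma flip2_flip2 (a : Fin 2) : flip2 (flip2 a) = a := by fin_cases a <;> rfl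

lemma flip2_inj : Function.Injective flip2 :=
  fun a b hab => by rw [← flip2_flip2 a, hab, flip2_flip2]

def gmap (L : ℕ) (x : Fin L → Fin 2) : Fin L → Fin 2 := fun i => flip2 (x i.rev)

lemma gmap_gmap (L : ℕ) : Function.Involutive (gmap L) := by
  intro x; funext i; simp [gmap, Fin.rev_rev, flip2_flip2]

def dfac (a : Fin 2) : ℂ := if a = 0 then -Complex.I else Complex.I

lemma dfac_flip2 (a : Fin 2) : dfac (flip2 a) = -dfac a := by
  fin_cases a <;> simp [dfac, flip2] <;> rfl

lemma dfac_mul_star (a : Fin 2) : dfac a * star (dfac a) = 1 := by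
  fin_cases a <;> simp [dfac]

noncomputable def cfac (L : ℕ) (x : Fin L → Fin 2) : ℂ := ∏ i, dfac (x i)

lemma cfac_mul_star (L : ℕ) (x : Fin L → Fin 2) : cfac L x * star (cfac L x) = 1 := by
  rw [cfac, star_prod, ← Finset.prod_mul_distrib]
  exact Finset.prod_eq_one (fun i _ => dfac_mul_star (x i))

noncomputable def Smat (L : ℕ) : Matrix (Fin L → Fin 2) (Fin L → Fin 2) ℂ :=
  Matrix.of fun x y => cfac L x * (if y = gmap L x then 1 else 0)

lemma cfac_gmap (L : ℕ) (hL : Odd L) (x : Fin L → Fin 2) :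
    cfac L (gmap L x) = -cfac L x := by
  have h1 : cfac L (gmap L x) = ∏ i : Fin L, -dfac (x i.rev) := by
    apply Finset.prod_congr rfl
    intro i _
    rw [gmap, dfac_flip2]
  have h2 : ∏ i : Fin L, -dfac (x i.rev) = (-1:ℂ)^L * ∏ i : Fin L, dfac (x i.rev) := by
    have : ∀ i : Fin L, -dfac (x i.rev) = (-1:ℂ) * dfac (x i.rev) := fun i => (neg_one_mul _).symm
    rw [Finset.prod_congr rfl (fun i _ => this i), Finset.prod_mul_distrib, Finset.prod_const]
    simp
  have h3 : ∏ i : Fin L, dfac (x i.rev) = cfac L x := by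
    rw [cfac, ← Equiv.prod_comp Fin.revPerm (fun i => dfac (x i))]
    rfl
  rw [h1, h2, h3, hL.neg_one_pow, neg_one_mul]

-- conjugation by the permutation gmap
noncomputable def gconj (L : ℕ) (A : Matrix (Fin L → Fin 2) (Fin L → Fin 2) ℂ) :
    Matrix (Fin L → Fin 2) (Fin L → Fin 2) ℂ :=
  A.submatrix (gmap L) (gmap L)

lemma gconj_apply (L A x y) : gconj L A x y = A (gmap L x) (gmap L y) := rfl

lemma gconj_mul (L : ℕ) (A B) : gconj L (A * B) = gconj L A * gconj L B := by
  rw [gconj, gconj, gconj,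
    ← Matrix.submatrix_mul_equiv A B (gmap L) ((gmap_gmap L).toPerm) (gmap L)]
  rfl

lemma gconj_add (L A B) : gconj L (A + B) = gconj L A + gconj L B := rfl
lemma gconj_sub (L A B) : gconj L (A - B) = gconj L A - gconj L B := rfl
lemma gconj_smul (L : ℕ) (c : ℂ) (A) : gconj L (c • A) = c • gconj L A := rfl
lemma gconj_one (L : ℕ) : gconj L 1 = 1 :=
  Matrix.submatrix_one_equiv ((gmap_gmap L).toPerm)

def flipM (m : Matrix (Fin 2) (Fin 2) ℂ) : Matrix (Fin 2) (Fin 2) ℂ :=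
  Matrix.of fun a b => m (flip2 a) (flip2 b)

lemma flipM_X : flipM pauliX = pauliX := by
  ext a b; fin_cases a <;> fin_cases b <;> simp [flipM, flip2, pauliX] <;> rfl
lemma flipM_Y : flipM pauliY = -pauliY := by
  ext a b; fin_cases a <;> fin_cases b <;> simp [flipM, flip2, pauliY] <;> rfl
lemma flipM_Z : flipM pauliZ = -pauliZ := by
  ext a b; fin_cases a <;> fin_cases b <;> simp [flipM, flip2, pauliZ] <;> rfl

lemma siteOp_neg (L : ℕ) (j : Fin L) (m) : siteOp L j (-m) = -siteOp L j m := by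
  ext x y; simp [siteOp_apply, Matrix.neg_apply]

lemma gconj_siteOp (L : ℕ) (j : Fin L) (m) :
    gconj L (siteOp L j m) = siteOp L j.rev (flipM m) := by
  ext x y
  rw [gconj_apply, siteOp_apply, siteOp_apply]
  congr 1
  -- product reindexing
  have hterm : ∀ i : Fin L, (if gmap L x i = gmap L y i then (1:ℂ) else 0)
      = (if x i.rev = y i.rev then (1:ℂ) else 0) := by
    intro i
    have : (gmap L x i = gmap L y i) ↔ (x i.rev = y i.rev) := by
      constructor
      · exact fun hh => flip2_inj hh
      · exact fun hh => by rw [gmap, gmap, hh]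
    simp only [this]
  apply Finset.prod_nbij' (fun i => Fin.rev i) (fun i => Fin.rev i)
  · intro i hi
    simp only [Finset.mem_filter, Finset.mem_univ, true_and] at hi ⊢
    intro hcon; exact hi (by rw [← Fin.rev_rev i, hcon, Fin.rev_rev])
  · intro i hi
    simp only [Finset.mem_filter, Finset.mem_univ, true_and] at hi ⊢
    intro hcon; exact hi (by rw [← hcon, Fin.rev_rev])
  · intro i _; exact Fin.rev_rev i
  · intro i _; exact Fin.rev_rev i
  · intro i _; rw [hterm i]

noncomputable def bond (Δ : ℝ) (L : ℕ) (j k : Fin L) :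
    Matrix (Fin L → Fin 2) (Fin L → Fin 2) ℂ :=
  siteOp L j pauliX * siteOp L k pauliX + siteOp L j pauliY * siteOp L k pauliY +
    (Δ : ℂ) • (siteOp L j pauliZ * siteOp L k pauliZ - 1)

lemma bond_comm (Δ : ℝ) (L : ℕ) {j k : Fin L} (hjk : j ≠ k) :
    bond Δ L j k = bond Δ L k j := by
  rw [bond, bond, siteOp_comm L hjk, siteOp_comm L hjk, siteOp_comm L hjk]

lemma siteOp_transpose (L : ℕ) (j : Fin L) (m) :
    (siteOp L j m)ᵀ = siteOp L j mᵀ := by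
  ext x y
  rw [Matrix.transpose_apply, siteOp_apply, siteOp_apply, Matrix.transpose_apply]
  congr 1
  apply Finset.prod_congr rfl
  intro i _
  simp only [eq_comm]

lemma siteOp_map_star (L : ℕ) (j : Fin L) (m) :
    (siteOp L j m).map (starRingEnd ℂ) = siteOp L j (m.map (starRingEnd ℂ)) := by
  ext x y
  rw [Matrix.map_apply, siteOp_apply, siteOp_apply, Matrix.map_apply, _root_.map_mul, map_prod]
  congr 1
  apply Finset.prod_congr rfl
  intro i _
  split <;> simp

lemma pauliX_transpose : pauliXᵀ = pauliX := by
  ext a b; fin_cases a <;> fin_cases b <;> simp [pauliX]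
lemma pauliY_transpose : pauliYᵀ = -pauliY := by
  ext a b; fin_cases a <;> fin_cases b <;> simp [pauliY]
lemma pauliZ_transpose : pauliZᵀ = pauliZ := by
  ext a b; fin_cases a <;> fin_cases b <;> simp [pauliZ]
lemma pauliX_star : pauliX.map (starRingEnd ℂ) = pauliX := by
  ext a b; fin_cases a <;> fin_cases b <;> simp [pauliX]
lemma pauliY_star : pauliY.map (starRingEnd ℂ) = -pauliY := by
  ext a b; fin_cases a <;> fin_cases b <;> simp [pauliY]
lemma pauliZ_star : pauliZ.map (starRingEnd ℂ) = pauliZ := by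
  ext a b; fin_cases a <;> fin_cases b <;> simp [pauliZ]

lemma bond_transpose (Δ : ℝ) (L : ℕ) {j k : Fin L} (hjk : j ≠ k) :
    (bond Δ L j k)ᵀ = bond Δ L j k := by
  rw [bond, Matrix.transpose_add, Matrix.transpose_add, Matrix.transpose_mul,
    Matrix.transpose_mul, Matrix.transpose_smul, Matrix.transpose_sub, Matrix.transpose_mul,
    Matrix.transpose_one, siteOp_transpose, siteOp_transpose, siteOp_transpose,
    siteOp_transpose, siteOp_transpose, siteOp_transpose, pauliX_transpose, pauliY_transpose,
    pauliZ_transpose, siteOp_neg, siteOp_neg, neg_mul_neg]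
  rw [siteOp_comm L hjk.symm, siteOp_comm L hjk.symm, siteOp_comm L hjk.symm, ← bond]

lemma bond_map_star (Δ : ℝ) (L : ℕ) (j k : Fin L) :
    (bond Δ L j k).map (starRingEnd ℂ) = bond Δ L j k := by
  have h1 : ∀ A B : Matrix (Fin L → Fin 2) (Fin L → Fin 2) ℂ,
      (A + B).map (starRingEnd ℂ) = A.map (starRingEnd ℂ) + B.map (starRingEnd ℂ) := by
    intro A B; ext x y; simp [Matrix.map_apply]
  have h2 : ∀ A B : Matrix (Fin L → Fin 2) (Fin L → Fin 2) ℂ,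
      (A - B).map (starRingEnd ℂ) = A.map (starRingEnd ℂ) - B.map (starRingEnd ℂ) := by
    intro A B; ext x y; simp [Matrix.map_apply]
  have h3 : ∀ (c : ℂ) (A : Matrix (Fin L → Fin 2) (Fin L → Fin 2) ℂ),
      (c • A).map (starRingEnd ℂ) = (starRingEnd ℂ c) • A.map (starRingEnd ℂ) := by
    intro c A; ext x y; simp [Matrix.map_apply]
  have h4 : (1 : Matrix (Fin L → Fin 2) (Fin L → Fin 2) ℂ).map (starRingEnd ℂ) = 1 := by
    ext x y; by_cases hxy : x = y <;> simp [Matrix.map_apply, Matrix.one_apply, hxy]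
  rw [bond, h1, h1, Matrix.map_mul, Matrix.map_mul, h3, h2, Matrix.map_mul, h4,
    siteOp_map_star, siteOp_map_star, siteOp_map_star, siteOp_map_star, siteOp_map_star,
    siteOp_map_star, pauliX_star, pauliY_star, pauliZ_star, siteOp_neg, siteOp_neg,
    neg_mul_neg, Complex.conj_ofReal, ← bond]

lemma bond_gconj (Δ : ℝ) (L : ℕ) (j k : Fin L) :
    gconj L (bond Δ L j k) = bond Δ L j.rev k.rev := by
  rw [bond, gconj_add, gconj_add, gconj_mul, gconj_mul, gconj_smul, gconj_sub, gconj_mul,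
    gconj_one, gconj_siteOp, gconj_siteOp, gconj_siteOp, gconj_siteOp, gconj_siteOp,
    gconj_siteOp, flipM_X, flipM_Y, flipM_Z, siteOp_neg, siteOp_neg, siteOp_neg, siteOp_neg,
    neg_mul_neg, neg_mul_neg, ← bond]

lemma xxzH_eq (Δ hm hp : ℝ) (L : ℕ) :
    xxzH Δ hm hp L =
      (∑ j : Fin (L - 1), bond Δ L (Fin.castLE (Nat.sub_le L 1) j) ⟨j.1 + 1, by have := j.2; omega⟩) +
      (if h : 0 < L then
          (hm : ℂ) • siteOp L ⟨0, h⟩ pauliZ + (hp : ℂ) • siteOp L ⟨L - 1, by omega⟩ pauliZ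
        else 0) := rfl

lemma bond_ne (L : ℕ) (j : Fin (L - 1)) :
    (Fin.castLE (Nat.sub_le L 1) j) ≠ (⟨j.1 + 1, by have := j.2; omega⟩ : Fin L) := by
  intro hcon
  have := congrArg Fin.val hcon
  simp [Fin.castLE] at this

lemma xxzH_transpose (Δ hm hp : ℝ) (L : ℕ) : (xxzH Δ hm hp L)ᵀ = xxzH Δ hm hp L := by
  rw [xxzH_eq, Matrix.transpose_add, Matrix.transpose_sum]
  congr 1
  · exact Finset.sum_congr rfl (fun j _ => bond_transpose Δ L (bond_ne L j))
  · by_cases hp0 : 0 < L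
    · rw [dif_pos hp0, Matrix.transpose_add, Matrix.transpose_smul,
        Matrix.transpose_smul, siteOp_transpose, siteOp_transpose, pauliZ_transpose]
    · rw [dif_neg hp0, Matrix.transpose_zero]

lemma map_star_add {n : Type} (A B : Matrix n n ℂ) :
    (A + B).map (starRingEnd ℂ) = A.map (starRingEnd ℂ) + B.map (starRingEnd ℂ) := by
  ext x y; simp [Matrix.map_apply]

lemma map_star_smul_real {n : Type} (c : ℝ) (A : Matrix n n ℂ) :
    ((c : ℂ) • A).map (starRingEnd ℂ) = (c : ℂ) • A.map (starRingEnd ℂ) := by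
  ext x y; simp [Matrix.map_apply]

lemma map_star_sum {n ι : Type} (s : Finset ι) (A : ι → Matrix n n ℂ) :
    (∑ i ∈ s, A i).map (starRingEnd ℂ) = ∑ i ∈ s, (A i).map (starRingEnd ℂ) := by
  ext x y; simp [Matrix.map_apply, Matrix.sum_apply]

lemma xxzH_map_star (Δ hm hp : ℝ) (L : ℕ) :
    (xxzH Δ hm hp L).map (starRingEnd ℂ) = xxzH Δ hm hp L := by
  rw [xxzH_eq, map_star_add, map_star_sum]
  congr 1
  · exact Finset.sum_congr rfl (fun j _ => bond_map_star Δ L _ _)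
  · by_cases hp0 : 0 < L
    · rw [dif_pos hp0, map_star_add, map_star_smul_real, map_star_smul_real,
        siteOp_map_star, siteOp_map_star, pauliZ_star]
    · rw [dif_neg hp0]
      ext x y; simp [Matrix.map_apply]

lemma xxzH_isHermitian (Δ hm hp : ℝ) (L : ℕ) : (xxzH Δ hm hp L).IsHermitian := by
  have h1 := xxzH_transpose Δ hm hp L
  have h2 := xxzH_map_star Δ hm hp L
  show (xxzH Δ hm hp L)ᴴ = xxzH Δ hm hp L
  calc (xxzH Δ hm hp L)ᴴ = ((xxzH Δ hm hp L)ᵀ).map (starRingEnd ℂ) := rfl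
  _ = xxzH Δ hm hp L := by rw [h1, h2]

lemma gconj_sum (L : ℕ) {ι : Type} (s : Finset ι)
    (A : ι → Matrix (Fin L → Fin 2) (Fin L → Fin 2) ℂ) :
    gconj L (∑ i ∈ s, A i) = ∑ i ∈ s, gconj L (A i) := by
  ext x y; simp [gconj_apply, Matrix.sum_apply]

lemma gconj_xxzH (Δ h : ℝ) (L : ℕ) (hL : 0 < L) :
    gconj L (xxzH Δ h (-h) L) = xxzH Δ h (-h) L := by
  rw [xxzH_eq, gconj_add, gconj_sum]
  congr 1
  · -- bulk
    have hterm : ∀ j : Fin (L - 1),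
        gconj L (bond Δ L (Fin.castLE (Nat.sub_le L 1) j) ⟨j.1 + 1, by have := j.2; omega⟩)
          = bond Δ L (Fin.castLE (Nat.sub_le L 1) j.rev) ⟨j.rev.1 + 1, by have := j.rev.2; omega⟩ := by
      intro j
      rw [bond_gconj]
      have hj2 := j.2
      have h1 : (Fin.castLE (Nat.sub_le L 1) j).rev
          = (⟨j.rev.1 + 1, by have := j.rev.2; omega⟩ : Fin L) := by
        apply Fin.ext
        simp only [Fin.val_rev, Fin.coe_castLE, Fin.val_mk]
        omega
      have h2 : (Fin.rev (⟨j.1 + 1, by have := j.2; omega⟩ : Fin L))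
          = Fin.castLE (Nat.sub_le L 1) j.rev := by
        apply Fin.ext
        simp only [Fin.val_rev, Fin.coe_castLE, Fin.val_mk]
        omega
      rw [h1, h2, bond_comm Δ L]
      intro hcon
      have := congrArg Fin.val hcon
      simp only [Fin.val_mk, Fin.coe_castLE] at this
      omega
    rw [Finset.sum_congr rfl (fun j _ => hterm j)]
    exact Equiv.sum_comp Fin.revPerm
      (fun j => bond Δ L (Fin.castLE (Nat.sub_le L 1) j) ⟨j.1 + 1, by have := j.2; omega⟩)
  · -- boundary
    rw [dif_pos hL]
    have e1 : gconj L ((h : ℂ) • siteOp L ⟨0, hL⟩ pauliZ + ((-h : ℝ) : ℂ) • siteOp L ⟨L - 1, by omega⟩ pauliZ)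
        = (h : ℂ) • siteOp L (Fin.rev ⟨0, hL⟩) (-pauliZ)
          + ((-h : ℝ) : ℂ) • siteOp L (Fin.rev ⟨L - 1, by omega⟩) (-pauliZ) := by
      rw [gconj_add, gconj_smul, gconj_smul, gconj_siteOp, gconj_siteOp, flipM_Z]
    rw [e1]
    have h1 : (Fin.rev (⟨0, hL⟩ : Fin L)) = (⟨L - 1, by omega⟩ : Fin L) := by
      apply Fin.ext; simp only [Fin.val_rev, Fin.val_mk]; try omega
    have h2 : (Fin.rev (⟨L - 1, by omega⟩ : Fin L)) = (⟨0, hL⟩ : Fin L) := by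
      apply Fin.ext; simp only [Fin.val_rev, Fin.val_mk]; try omega
    rw [h1, h2, siteOp_neg, siteOp_neg]
    push_cast
    module

lemma pauliX_support {a b : Fin 2} (h : pauliX a b ≠ 0) : b = flip2 a := by
  fin_cases a <;> fin_cases b <;> first
    | rfl
    | (exfalso; apply h; simp [pauliX])
lemma pauliY_support {a b : Fin 2} (h : pauliY a b ≠ 0) : b = flip2 a := by
  fin_cases a <;> fin_cases b <;> first
    | rfl
    | (exfalso; apply h; simp [pauliY])
lemma pauliZ_support {a b : Fin 2} (h : pauliZ a b ≠ 0) : b = a := by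
  fin_cases a <;> fin_cases b <;> first
    | rfl
    | (exfalso; apply h; simp [pauliZ])

lemma cfac_pair (L : ℕ) (j k : Fin L) (hjk : j ≠ k) (x y : Fin L → Fin 2)
    (hoff : ∀ i, i ≠ j → i ≠ k → x i = y i)
    (hj : y j = flip2 (x j)) (hk : y k = flip2 (x k)) : cfac L y = cfac L x := by
  rw [cfac, cfac]
  rw [← Finset.mul_prod_erase Finset.univ (fun i => dfac (y i)) (Finset.mem_univ j),
      ← Finset.mul_prod_erase Finset.univ (fun i => dfac (x i)) (Finset.mem_univ j),
      ← Finset.mul_prod_erase (Finset.univ.erase j) (fun i => dfac (y i))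
        (Finset.mem_erase.mpr ⟨hjk.symm, Finset.mem_univ k⟩),
      ← Finset.mul_prod_erase (Finset.univ.erase j) (fun i => dfac (x i))
        (Finset.mem_erase.mpr ⟨hjk.symm, Finset.mem_univ k⟩)]
  have hrest : ∏ i ∈ (Finset.univ.erase j).erase k, dfac (y i)
      = ∏ i ∈ (Finset.univ.erase j).erase k, dfac (x i) := by
    apply Finset.prod_congr rfl
    intro i hi
    rw [Finset.mem_erase, Finset.mem_erase] at hi
    rw [hoff i hi.2.1 hi.1]
  rw [hrest, hj, hk, dfac_flip2, dfac_flip2]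
  ring

lemma siteOpZ_offdiag (L : ℕ) (j : Fin L) {x y : Fin L → Fin 2} (hxy : x ≠ y) :
    siteOp L j pauliZ x y = 0 := by
  rw [siteOp_apply]
  obtain ⟨i0, hi0⟩ := Function.ne_iff.mp hxy
  rcases eq_or_ne i0 j with rfl | hij
  · rw [show pauliZ (x i0) (y i0) = 0 from by
      by_contra hc; exact hi0 (pauliZ_support hc).symm]
    ring
  · have hz : (∏ i ∈ Finset.univ.filter (fun i => i ≠ j), if x i = y i then (1:ℂ) else 0) = 0 :=
      Finset.prod_eq_zero (Finset.mem_filter.mpr ⟨Finset.mem_univ i0, hij⟩) (if_neg hi0)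
    rw [hz]; ring

lemma bondZZ_offdiag (L : ℕ) {j k : Fin L} (hjk : j ≠ k) {x y : Fin L → Fin 2} (hxy : x ≠ y) :
    (siteOp L j pauliZ * siteOp L k pauliZ) x y = 0 := by
  rw [siteOp_mul_apply L j k hjk]
  obtain ⟨i0, hi0⟩ := Function.ne_iff.mp hxy
  rcases eq_or_ne i0 j with rfl | hij
  · rw [show pauliZ (x i0) (y i0) = 0 from by
      by_contra hc; exact hi0 (pauliZ_support hc).symm]
    ring
  rcases eq_or_ne i0 k with rfl | hik
  · rw [show pauliZ (x i0) (y i0) = 0 from by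
      by_contra hc; exact hi0 (pauliZ_support hc).symm]
    ring
  · have hz : (∏ i ∈ Finset.univ.filter (fun i => i ≠ j ∧ i ≠ k), if x i = y i then (1:ℂ) else 0) = 0 :=
      Finset.prod_eq_zero (Finset.mem_filter.mpr ⟨Finset.mem_univ i0, hij, hik⟩) (if_neg hi0)
    rw [hz]; ring

lemma bondXX_conserve (L : ℕ) {j k : Fin L} (hjk : j ≠ k) (a : Matrix (Fin 2) (Fin 2) ℂ)
    (ha : ∀ {p q : Fin 2}, a p q ≠ 0 → q = flip2 p)
    {x y : Fin L → Fin 2} (hc : cfac L x ≠ cfac L y) :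
    (siteOp L j a * siteOp L k a) x y = 0 := by
  rw [siteOp_mul_apply L j k hjk]
  by_cases hyj : a (x j) (y j) = 0
  · rw [hyj]; ring
  by_cases hyk : a (x k) (y k) = 0
  · rw [hyk]; ring
  by_cases hoff : ∀ i, i ≠ j → i ≠ k → x i = y i
  · exact absurd (cfac_pair L j k hjk x y hoff (ha hyj) (ha hyk)).symm hc
  · push_neg at hoff
    obtain ⟨i0, hij, hik, hne⟩ := hoff
    have hz : (∏ i ∈ Finset.univ.filter (fun i => i ≠ j ∧ i ≠ k), if x i = y i then (1:ℂ) else 0) = 0 :=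
      Finset.prod_eq_zero (Finset.mem_filter.mpr ⟨Finset.mem_univ i0, hij, hik⟩) (if_neg hne)
    rw [hz]; ring

lemma xxzH_conserve (Δ hm hp : ℝ) (L : ℕ) {x y : Fin L → Fin 2}
    (hc : cfac L x ≠ cfac L y) : xxzH Δ hm hp L x y = 0 := by
  have hxy : x ≠ y := fun hh => hc (by rw [hh])
  rw [xxzH_eq, Matrix.add_apply, Matrix.sum_apply]
  have hbond : ∀ j : Fin (L - 1),
      bond Δ L (Fin.castLE (Nat.sub_le L 1) j) ⟨j.1 + 1, by have := j.2; omega⟩ x y = 0 := by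
    intro j
    rw [bond, Matrix.add_apply, Matrix.add_apply, Matrix.smul_apply, Matrix.sub_apply,
      bondXX_conserve L (bond_ne L j) pauliX (fun h => pauliX_support h) hc,
      bondXX_conserve L (bond_ne L j) pauliY (fun h => pauliY_support h) hc,
      bondZZ_offdiag L (bond_ne L j) hxy, Matrix.one_apply_ne hxy]
    simp
  rw [Finset.sum_congr rfl (fun j _ => hbond j), Finset.sum_const_zero]
  by_cases hp0 : 0 < L
  · rw [dif_pos hp0, Matrix.add_apply, Matrix.smul_apply, Matrix.smul_apply,
      siteOpZ_offdiag L _ hxy, siteOpZ_offdiag L _ hxy]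
    simp
  · rw [dif_neg hp0]; simp

lemma Smat_apply (L : ℕ) (x y) : Smat L x y = cfac L x * (if y = gmap L x then 1 else 0) := rfl

lemma Smat_mul_xxzH (Δ h : ℝ) (L : ℕ) (hL : 0 < L) :
    Smat L * xxzH Δ h (-h) L = xxzH Δ h (-h) L * Smat L := by
  ext x y
  rw [Matrix.mul_apply, Matrix.mul_apply]
  have lhs : ∑ z, Smat L x z * xxzH Δ h (-h) L z y
      = cfac L x * xxzH Δ h (-h) L (gmap L x) y := by
    have : ∀ z, Smat L x z * xxzH Δ h (-h) L z y
        = if z = gmap L x then cfac L x * xxzH Δ h (-h) L z y else 0 := by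
      intro z; rw [Smat_apply]; split <;> ring
    rw [Finset.sum_congr rfl (fun z _ => this z), Finset.sum_ite_eq' Finset.univ (gmap L x)]
    simp
  have rhs : ∑ z, xxzH Δ h (-h) L x z * Smat L z y
      = xxzH Δ h (-h) L x (gmap L y) * cfac L (gmap L y) := by
    have : ∀ z, xxzH Δ h (-h) L x z * Smat L z y
        = if z = gmap L y then xxzH Δ h (-h) L x z * cfac L z else 0 := by
      intro z
      rw [Smat_apply]
      have hiff : (y = gmap L z) ↔ (z = gmap L y) := by
        constructor
        · intro hh; rw [hh, gmap_gmap L]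
        · intro hh; rw [hh, gmap_gmap L]
      by_cases hz : z = gmap L y
      · rw [if_pos hz, if_pos (hiff.mpr hz)]; ring
      · rw [if_neg hz, if_neg (fun hh => hz (hiff.mp hh))]; ring
    rw [Finset.sum_congr rfl (fun z _ => this z), Finset.sum_ite_eq' Finset.univ (gmap L y)]
    simp
  rw [lhs, rhs]
  have key : xxzH Δ h (-h) L (gmap L x) y = xxzH Δ h (-h) L x (gmap L y) := by
    have := congrFun (congrFun (gconj_xxzH Δ h L hL) x) (gmap L y)
    rw [gconj_apply, gmap_gmap L] at this
    exact this
  rw [key]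
  by_cases hz : xxzH Δ h (-h) L x (gmap L y) = 0
  · rw [hz]; ring
  · have : cfac L x = cfac L (gmap L y) := by
      by_contra hc
      exact hz (xxzH_conserve Δ h (-h) L hc)
    rw [this]; ring

lemma Smat_mulVec (L : ℕ) (v : (Fin L → Fin 2) → ℂ) :
    Smat L *ᵥ v = fun x => cfac L x * v (gmap L x) := by
  funext x
  rw [Matrix.mulVec]
  show (∑ y, Smat L x y * v y) = _
  have : ∀ y, Smat L x y * v y = if y = gmap L x then cfac L x * v y else 0 := by
    intro y; rw [Smat_apply]; split <;> ring
  rw [Finset.sum_congr rfl (fun z _ => this z), Finset.sum_ite_eq' Finset.univ (gmap L x)]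
  simp

lemma Smat_J_J (L : ℕ) (hL : Odd L) (v : (Fin L → Fin 2) → ℂ) :
    Smat L *ᵥ star (Smat L *ᵥ star v) = -v := by
  have h1 : star (Smat L *ᵥ star v) = fun x => star (cfac L x) * v (gmap L x) := by
    rw [Smat_mulVec]
    funext x
    show star (cfac L x * star v (gmap L x)) = _
    rw [star_mul']
    show star (cfac L x) * star (star (v (gmap L x))) = _
    rw [star_star]
  rw [h1, Smat_mulVec]
  funext x
  show cfac L x * (star (cfac L (gmap L x)) * v (gmap L (gmap L x))) = -v x
  rw [gmap_gmap L, cfac_gmap L hL]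
  have := cfac_mul_star L x
  calc cfac L x * (star (-cfac L x) * v x) = -((cfac L x * star (cfac L x)) * v x) := by
        rw [star_neg]; ring
  _ = -v x := by rw [this, one_mul]

lemma dot_self_eq (n : Type) [Fintype n] (v : n → ℂ) :
    dotProduct (star v) v = ((∑ i, Complex.normSq (v i) : ℝ) : ℂ) := by
  rw [dotProduct]
  push_cast
  apply Finset.sum_congr rfl
  intro i _
  exact Complex.normSq_eq_conj_mul_self.symm

lemma dot_self_ne_zero (n : Type) [Fintype n] {v : n → ℂ} (hv : v ≠ 0) :
    dotProduct (star v) v ≠ 0 := by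
  rw [dot_self_eq]
  intro hcon
  have hsum : (∑ i, Complex.normSq (v i) : ℝ) = 0 := by exact_mod_cast hcon
  apply hv
  funext i
  have := (Finset.sum_eq_zero_iff_of_nonneg
    (fun i _ => Complex.normSq_nonneg (v i))).mp hsum i (Finset.mem_univ i)
  exact Complex.normSq_eq_zero.mp this

lemma eig_real {n : Type} [Fintype n] [DecidableEq n] (A : Matrix n n ℂ)
    (hA : A.IsHermitian) {v : n → ℂ} (hv : v ≠ 0) (μ : ℂ)
    (hev : A *ᵥ v = μ • v) : star μ = μ := by
  have a1 : dotProduct (star v) (A *ᵥ v) = μ * dotProduct (star v) v := by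
    rw [hev, dotProduct_smul, smul_eq_mul]
  have a2 : dotProduct (star v) (A *ᵥ v) = star μ * dotProduct (star v) v := by
    rw [Matrix.dotProduct_mulVec]
    have hvm : Matrix.vecMul (star v) A = star (A *ᵥ v) := by
      rw [Matrix.star_mulVec, hA.eq]
    rw [hvm, hev, star_smul, smul_dotProduct, smul_eq_mul]
  have := a1.symm.trans a2
  exact (mul_right_cancel₀ (dot_self_ne_zero n hv) this.symm)

lemma mulVec_star_comm {n : Type} [Fintype n] (A : Matrix n n ℂ)
    (hA : A.map (starRingEnd ℂ) = A) (w : n → ℂ) :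
    A *ᵥ star w = star (A *ᵥ w) := by
  funext x
  show (∑ y, A x y * star w y) = star (∑ y, A x y * w y)
  rw [star_sum]
  apply Finset.sum_congr rfl
  intro y _
  have hentry : star (A x y) = A x y := congrFun (congrFun hA x) y
  show A x y * star (w y) = star (A x y * w y)
  rw [star_mul', hentry]


/-- For an odd-length open XXZ chain with antiparallel boundary fields `h₋ = h`,
`h₊ = -h`, every eigenvalue of the Hamiltonian has even multiplicity: the dimension of
every eigenspace is even. -/
theorem xxz_odd_length_double_degeneracy
    (L : ℕ) (hL : Odd L) (Δ h : ℝ) :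
    ∀ μ : ℂ, Even (Module.finrank ℂ
      (Module.End.eigenspace (Matrix.toLin' (xxzH Δ h (-h) L)) μ)) := by
  intro μ
  have hLpos : 0 < L := hL.pos
  set A := xxzH Δ h (-h) L with hAdef
  set E := Module.End.eigenspace (Matrix.toLin' A) μ with hEdef
  by_cases hbot : E = ⊥
  · rw [hbot, finrank_bot]
    exact Even.zero
  obtain ⟨v, hvE, hv0⟩ := Submodule.exists_mem_ne_zero_of_ne_bot hbot
  have hev : A *ᵥ v = μ • v := by
    have := Module.End.mem_eigenspace_iff.mp hvE
    rwa [Matrix.toLin'_apply] at this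
  have hreal : star μ = μ := eig_real A (xxzH_isHermitian Δ h (-h) L) hv0 μ hev
  have hstarH : A.map (starRingEnd ℂ) = A := xxzH_map_star Δ h (-h) L
  have hcomm : Smat L * A = A * Smat L := Smat_mul_xxzH Δ h L hLpos
  -- the antilinear map on the eigenspace
  have hJmem : ∀ w : (Fin L → Fin 2) → ℂ, w ∈ E → Smat L *ᵥ star w ∈ E := by
    intro w hw
    have hw' : A *ᵥ w = μ • w := by
      have := Module.End.mem_eigenspace_iff.mp hw
      rwa [Matrix.toLin'_apply] at this
    rw [Module.End.mem_eigenspace_iff, Matrix.toLin'_apply]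
    rw [Matrix.mulVec_mulVec, ← hcomm, ← Matrix.mulVec_mulVec,
      mulVec_star_comm A hstarH, hw', star_smul, hreal, Matrix.mulVec_smul]
  let J : E → E := fun w => ⟨Smat L *ᵥ star (w : (Fin L → Fin 2) → ℂ), hJmem _ w.2⟩
  apply even_finrank_of_antilinear (Module.finrank ℂ E) E J _ _ _ rfl
  · intro u w
    apply Subtype.ext
    show Smat L *ᵥ star ((u : (Fin L → Fin 2) → ℂ) + w) = _
    rw [star_add, Matrix.mulVec_add]
    rfl
  · intro c w
    apply Subtype.ext
    show Smat L *ᵥ star (c • (w : (Fin L → Fin 2) → ℂ)) = _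
    rw [star_smul, Matrix.mulVec_smul]
    rfl
  · intro w
    apply Subtype.ext
    show Smat L *ᵥ star (Smat L *ᵥ star (w : (Fin L → Fin 2) → ℂ)) = _
    rw [Smat_J_J L hL]
    rfl
end
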